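/- For k ∈ ℕ (k ≥ 0), let φ_k(x) = (k! 2^k √π)^{−1/2} e^{−x²/2} H_k(x) be the k-th Hermite function. Let a, b, c ∈ ℝ with a < 0 and suppose that √(1−a) and b are algebraically independent over ℚ. Then for all j, k ≥ 0 with j ≡ k (mod 2), ∫_ℝ e^{a x² + b x + c} φ_j(x) φ_k(x) dx ≠ 0. -/

import Mathlib

/-!
Write `1 - a = s²` with `s = √(1 - a)`. The integrand is a positive constant times
`P(x) exp (-s² x² + b x)` for the nonzero rational polynomial `P = H_j H_k`. Integration by parts
gives the moment recursion `2 s² M_{p+1} = p M_{p-1} + b M_p`, hence `(2 s²)^p M_p = M_0 U_p(s, b)`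
and `(2 s²)^(deg P) ∫ P(x) exp (-s² x² + b x) dx = M_0 W(s, b)` for explicit `U_p, W ∈ ℚ[X₀, X₁]`.
Setting `X₀ = 0` in `W` leaves the leading term of `P`, so `W ≠ 0`; algebraic independence of
`s, b` gives `W(s, b) ≠ 0`, and `M_0 > 0`.
-/

/-- The `k`-th (physicists') Hermite polynomial `H_k(x) = (-1)^k e^{x²} (d/dx)^k e^{-x²}`. -/
noncomputable def hermitePoly (k : ℕ) (x : ℝ) : ℝ :=
  (-1) ^ k * Real.exp (x ^ 2) * iteratedDeriv k (fun y => Real.exp (-y ^ 2)) x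

/-- The `k`-th Hermite function `φ_k(x) = (k! 2^k √π)^{-1/2} e^{-x²/2} H_k(x)`. -/
noncomputable def hermiteFun (k : ℕ) (x : ℝ) : ℝ :=
  (Real.sqrt (k.factorial * 2 ^ k * Real.sqrt Real.pi))⁻¹ *
    Real.exp (-x ^ 2 / 2) * hermitePoly k x

open MeasureTheory Real Polynomial

noncomputable def physHermite : ℕ → ℚ[X]
  | 0 => 1
  | n + 1 => C 2 * X * physHermite n - derivative (physHermite n)

theorem iteratedDeriv_exp_neg_sq (n : ℕ) (x : ℝ) :
    iteratedDeriv n (fun y => exp (-y ^ 2)) x =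
      (-1) ^ n * aeval x (physHermite n) * exp (-x ^ 2) := by
  induction n generalizing x with
  | zero => simp [physHermite]
  | succ n ih =>
    rw [iteratedDeriv_succ, funext ih]
    refine (((((physHermite n).differentiable_aeval x).hasDerivAt.const_mul ((-1 : ℝ) ^ n)).mul
      ((hasDerivAt_pow 2 x).neg.exp)).congr_deriv ?_).deriv
    simp only [physHermite, map_sub, map_mul, aeval_X, Polynomial.deriv_aeval, Pi.neg_apply,
      map_ofNat]
    ring

theorem hermitePoly_eq_aeval (k : ℕ) (x : ℝ) : hermitePoly k x = aeval x (physHermite k) := by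
  have h_sign : (-1 : ℝ) ^ k * (-1) ^ k = 1 := by simp [← mul_pow]
  have h_exp : exp (x ^ 2) * exp (-x ^ 2) = 1 := by rw [← exp_add, add_neg_cancel, exp_zero]
  rw [hermitePoly, iteratedDeriv_exp_neg_sq]
  linear_combination exp (x ^ 2) * exp (-x ^ 2) * aeval x (physHermite k) * h_sign +
    aeval x (physHermite k) * h_exp

theorem natDegree_physHermite_le (n : ℕ) : (physHermite n).natDegree ≤ n := by
  induction n with
  | zero => simp [physHermite]
  | succ n ih =>
    refine (natDegree_sub_le _ _).trans (max_le ?_ ?_)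
    · exact natDegree_mul_le.trans (by rw [natDegree_C_mul_X 2 two_ne_zero]; omega)
    · exact (natDegree_derivative_le _).trans (by omega)

theorem coeff_physHermite_self (n : ℕ) : (physHermite n).coeff n = 2 ^ n := by
  induction n with
  | zero => simp [physHermite]
  | succ n ih =>
    rw [physHermite, coeff_sub, mul_assoc, coeff_C_mul, coeff_X_mul, ih, coeff_derivative,
      coeff_eq_zero_of_natDegree_lt (n := n + 2) (by grind [natDegree_physHermite_le])]
    ring

theorem physHermite_ne_zero (n : ℕ) : physHermite n ≠ 0 := fun h =>
  pow_ne_zero n (two_ne_zero : (2 : ℚ) ≠ 0) (by rw [← coeff_physHermite_self n, h, coeff_zero])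

section GaussianMoment

variable {α : ℝ}

noncomputable def gaussianMoment (α b : ℝ) (p : ℕ) : ℝ :=
  ∫ x : ℝ, x ^ p * exp (-α * x ^ 2 + b * x)

theorem integrable_pow_mul_exp_neg_mul_sq (hα : 0 < α) (p : ℕ) :
    Integrable fun x : ℝ => x ^ p * exp (-α * x ^ 2) := by
  simpa [rpow_natCast] using
    integrable_rpow_mul_exp_neg_mul_sq hα (s := p) (by linarith [p.cast_nonneg (α := ℝ)])

theorem integrable_pow_mul_exp_neg_mul_sq_add_mul (hα : 0 < α) (b : ℝ) (p : ℕ) :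
    Integrable fun x : ℝ => x ^ p * exp (-α * x ^ 2 + b * x) := by
  set c := b / (2 * α)
  have h_eq : (fun x : ℝ => x ^ p * exp (-α * x ^ 2 + b * x)) = fun x => exp (α * c ^ 2) *
      ∑ m ∈ Finset.range (p + 1),
        c ^ (p - m) * p.choose m * ((x - c) ^ m * exp (-α * (x - c) ^ 2)) := by
    ext x
    have h_square : -α * x ^ 2 + b * x = α * c ^ 2 + -α * (x - c) ^ 2 := by
      simp only [c]; field_simp; ring
    rw [h_square, exp_add, show x = (x - c) + c by ring, add_pow, Finset.sum_mul, Finset.mul_sum]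
    simp only [add_sub_cancel_right]
    refine Finset.sum_congr rfl fun m _ => by ring
  rw [h_eq]
  exact (integrable_finsetSum _ fun m _ =>
    ((integrable_pow_mul_exp_neg_mul_sq hα m).comp_sub_right c).const_mul _).const_mul _

theorem gaussianMoment_zero_pos (hα : 0 < α) (b : ℝ) : 0 < gaussianMoment α b 0 := by
  simpa [gaussianMoment] using
    integral_exp_pos (by simpa using integrable_pow_mul_exp_neg_mul_sq_add_mul hα b 0)

theorem gaussianMoment_succ (hα : 0 < α) (b : ℝ) (p : ℕ) :
    2 * α * gaussianMoment α b (p + 1) =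
      p * gaussianMoment α b (p - 1) + b * gaussianMoment α b p := by
  have hI (q : ℕ) (c : ℝ) : Integrable fun x => c * (x ^ q * exp (-α * x ^ 2 + b * x)) :=
    (integrable_pow_mul_exp_neg_mul_sq_add_mul hα b q).const_mul c
  have h_deriv : ∀ x : ℝ, HasDerivAt (fun y => y ^ p * exp (-α * y ^ 2 + b * y))
      (p * (x ^ (p - 1) * exp (-α * x ^ 2 + b * x)) + b * (x ^ p * exp (-α * x ^ 2 + b * x))
        - 2 * α * (x ^ (p + 1) * exp (-α * x ^ 2 + b * x))) x := fun x => by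
    refine ((hasDerivAt_pow p x).mul ((((hasDerivAt_pow 2 x).const_mul (-α)).add
      ((hasDerivAt_id x).const_mul b)).exp)).congr_deriv ?_
    simp only [id, Pi.add_apply]
    ring
  -- integration by parts: the derivative of `x ^ p * exp (-α x² + b x)` integrates to zero
  have h := integral_eq_zero_of_hasDerivAt_of_integrable h_deriv
    (((hI _ _).add (hI _ _)).sub (hI _ _))
    (integrable_pow_mul_exp_neg_mul_sq_add_mul hα b p)
  rw [integral_sub ((hI _ _).fun_add (hI _ _)) (hI _ _), integral_add (hI _ _) (hI _ _),
    integral_const_mul, integral_const_mul, integral_const_mul] at h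
  simp only [gaussianMoment]
  linarith

theorem integral_aeval_mul_exp_eq_sum (hα : 0 < α) (b : ℝ) (P : ℚ[X]) :
    ∫ x : ℝ, aeval x P * exp (-α * x ^ 2 + b * x) =
      ∑ m ∈ Finset.range (P.natDegree + 1), (P.coeff m : ℝ) * gaussianMoment α b m := by
  simp_rw [aeval_eq_sum_range, Finset.sum_mul, Rat.smul_def, mul_assoc]
  rw [integral_finsetSum _ fun m _ =>
    (integrable_pow_mul_exp_neg_mul_sq_add_mul hα b m).const_mul _]
  simp_rw [integral_const_mul, gaussianMoment]

end GaussianMoment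

noncomputable def gaussianMomentPoly : ℕ → MvPolynomial (Fin 2) ℚ
  | 0 => 1
  | 1 => MvPolynomial.X 1
  | p + 2 => MvPolynomial.X 1 * gaussianMomentPoly (p + 1) +
      MvPolynomial.C (2 * (p + 1) : ℚ) * MvPolynomial.X 0 ^ 2 * gaussianMomentPoly p

theorem pow_mul_gaussianMoment_eq {s : ℝ} (hs : s ≠ 0) (b : ℝ) : ∀ p : ℕ,
    (2 * s ^ 2) ^ p * gaussianMoment (s ^ 2) b p =
      gaussianMoment (s ^ 2) b 0 * MvPolynomial.aeval ![s, b] (gaussianMomentPoly p)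
  | 0 => by simp [gaussianMomentPoly]
  | 1 => by
    have h := gaussianMoment_succ (α := s ^ 2) (by positivity) b 0
    simp only [gaussianMomentPoly, MvPolynomial.aeval_X, Matrix.cons_val_one, Matrix.cons_val_zero,
      Nat.cast_zero, zero_mul, zero_add, pow_one] at h ⊢
    linear_combination h
  | p + 2 => by
    have h := gaussianMoment_succ (α := s ^ 2) (by positivity) b (p + 1)
    have e₀ := pow_mul_gaussianMoment_eq hs b p
    have e₁ := pow_mul_gaussianMoment_eq hs b (p + 1)
    simp only [gaussianMomentPoly, map_add, map_mul, map_pow, MvPolynomial.aeval_X,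
      MvPolynomial.aeval_C, Matrix.cons_val_zero, Matrix.cons_val_one, eq_ratCast, Rat.cast_ofNat,
      Rat.cast_natCast, Rat.cast_one, Nat.cast_add, Nat.cast_one, add_tsub_cancel_right] at h ⊢
    linear_combination (2 * s ^ 2) ^ (p + 1) * h + ((p : ℝ) + 1) * 2 * s ^ 2 * e₀ + b * e₁

theorem aeval_gaussianMomentPoly_zero_X : ∀ p : ℕ,
    MvPolynomial.aeval ![(0 : ℚ[X]), X] (gaussianMomentPoly p) = X ^ p
  | 0 => by simp [gaussianMomentPoly]
  | 1 => by simp [gaussianMomentPoly]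
  | p + 2 => by
    simp [gaussianMomentPoly, aeval_gaussianMomentPoly_zero_X p,
      aeval_gaussianMomentPoly_zero_X (p + 1), pow_succ]
    ring

noncomputable def gaussianIntegralPoly (P : ℚ[X]) : MvPolynomial (Fin 2) ℚ :=
  ∑ m ∈ Finset.range (P.natDegree + 1), MvPolynomial.C (P.coeff m) *
    (MvPolynomial.C 2 * MvPolynomial.X 0 ^ 2) ^ (P.natDegree - m) * gaussianMomentPoly m

theorem aeval_gaussianIntegralPoly_zero_X (P : ℚ[X]) :
    MvPolynomial.aeval ![(0 : ℚ[X]), X] (gaussianIntegralPoly P) =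
      C P.leadingCoeff * X ^ P.natDegree := by
  rw [gaussianIntegralPoly, map_sum, Finset.sum_eq_single_of_mem _ (Finset.self_mem_range_succ _)]
  · simp [aeval_gaussianMomentPoly_zero_X]
  · intro m hm hne
    have : P.natDegree - m ≠ 0 := by grind
    simp [this]

theorem gaussianIntegralPoly_ne_zero {P : ℚ[X]} (hP : P ≠ 0) : gaussianIntegralPoly P ≠ 0 := by
  intro h
  have := aeval_gaussianIntegralPoly_zero_X P
  rw [h, map_zero, eq_comm] at this
  exact mul_ne_zero (C_ne_zero.mpr (leadingCoeff_ne_zero.mpr hP)) (pow_ne_zero _ X_ne_zero) this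

theorem pow_mul_integral_aeval_mul_exp_eq {s : ℝ} (hs : s ≠ 0) (b : ℝ) (P : ℚ[X]) :
    (2 * s ^ 2) ^ P.natDegree * ∫ x : ℝ, aeval x P * exp (-s ^ 2 * x ^ 2 + b * x) =
      gaussianMoment (s ^ 2) b 0 * MvPolynomial.aeval ![s, b] (gaussianIntegralPoly P) := by
  rw [integral_aeval_mul_exp_eq_sum (by positivity) b P, gaussianIntegralPoly, map_sum,
    Finset.mul_sum, Finset.mul_sum]
  refine Finset.sum_congr rfl fun m hm => ?_
  rw [← pow_sub_mul_pow _ (Finset.mem_range_succ_iff.mp hm)]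
  simp only [map_mul, map_pow, MvPolynomial.aeval_C, MvPolynomial.aeval_X, Matrix.cons_val_zero,
    eq_ratCast, Rat.cast_ofNat]
  linear_combination (P.coeff m : ℝ) * (2 * s ^ 2) ^ (P.natDegree - m) *
    pow_mul_gaussianMoment_eq hs b m

theorem integral_aeval_mul_exp_ne_zero {s b : ℝ} (hsb : AlgebraicIndependent ℚ ![s, b])
    {P : ℚ[X]} (hP : P ≠ 0) :
    ∫ x : ℝ, aeval x P * exp (-s ^ 2 * x ^ 2 + b * x) ≠ 0 := by
  have hs : s ≠ 0 := fun h => hsb.transcendental 0 (by simp [h, isAlgebraic_zero])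
  have hW : MvPolynomial.aeval ![s, b] (gaussianIntegralPoly P) ≠ 0 := fun h =>
    gaussianIntegralPoly_ne_zero hP (hsb (h.trans (map_zero _).symm))
  intro h
  have := pow_mul_integral_aeval_mul_exp_eq hs b P
  rw [h, mul_zero, eq_comm] at this
  exact mul_ne_zero (gaussianMoment_zero_pos (by positivity) b).ne' hW this

theorem integral_gaussian_weighted_hermite_ne_zero_general
    (a b c : ℝ) (ha : a < 0)
    (hab : AlgebraicIndependent ℚ ![Real.sqrt (1 - a), b])
    (j k : ℕ) :
    (∫ x : ℝ, Real.exp (a * x ^ 2 + b * x + c) * hermiteFun j x * hermiteFun k x) ≠ 0 := by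
  have hs : √(1 - a) ^ 2 = 1 - a := sq_sqrt (by linarith)
  set Nj := (√(j.factorial * 2 ^ j * √π))⁻¹
  set Nk := (√(k.factorial * 2 ^ k * √π))⁻¹
  have h_integrand (x : ℝ) :
      exp (a * x ^ 2 + b * x + c) * hermiteFun j x * hermiteFun k x = Nj * Nk * exp c *
        (aeval x (physHermite j * physHermite k) * exp (-√(1 - a) ^ 2 * x ^ 2 + b * x)) := by
    have h_exp : exp (a * x ^ 2 + b * x + c) * exp (-x ^ 2 / 2) * exp (-x ^ 2 / 2) =
        exp c * exp (-√(1 - a) ^ 2 * x ^ 2 + b * x) := by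
      simp only [← exp_add, hs]; ring_nf
    simp only [hermiteFun, hermitePoly_eq_aeval, map_mul]
    linear_combination Nj * Nk * aeval x (physHermite j) * aeval x (physHermite k) * h_exp
  simp_rw [h_integrand, integral_const_mul]
  exact mul_ne_zero (by positivity) (integral_aeval_mul_exp_ne_zero hab
    (mul_ne_zero (physHermite_ne_zero j) (physHermite_ne_zero k)))

/-- If `a < 0` and `√(1-a)` and `b` are algebraically independent over `ℚ`, then
`∫ e^{ax² + bx + c} φ_j φ_k ≠ 0` whenever `j ≡ k (mod 2)`. -/
theorem integral_gaussian_weighted_hermite_ne_zero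
    (a b c : ℝ) (ha : a < 0)
    (hab : AlgebraicIndependent ℚ ![Real.sqrt (1 - a), b])
    (j k : ℕ) (hjk : j % 2 = k % 2) :
    (∫ x : ℝ, Real.exp (a * x ^ 2 + b * x + c) * hermiteFun j x * hermiteFun k x) ≠ 0 :=
  integral_gaussian_weighted_hermite_ne_zero_general a b c ha hab j k
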